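/- arXiv:1701.02193 — 2 statements merged into one kernel-verified Lean document; each statement's English description precedes it below -/
import Mathlib

section
/- In Ruleset D of Quantum Nim (where any nonempty superposition of classical moves, including a single classical move, is allowed), a superposition of single Nim heaps whose largest heap has size k has Grundy value k. -/
namespace QGame

variable {Pos Move : Type} [DecidableEq Pos]

/-- Result of applying the superposed move `M` (a finite set of classical move
labels) to the superposition `S` of classical positions: the set of all results
of a classical move of `M` applied to a realisation where it is legal. -/
def qApply (Γ : Pos → Move → Option Pos) (S : Finset Pos) (M : Finset Move) :
    Finset Pos :=
  S.biUnion fun G => M.biUnion fun m => (Γ G m).toFinset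

/-- The classical move `m` is legal in at least one realisation of `S`. -/
def MoveLegal (Γ : Pos → Move → Option Pos) (S : Finset Pos) (m : Move) : Prop :=
  ∃ G ∈ S, (Γ G m).isSome

/-- Basic legality of a Q-move: nonempty, and each classical move is legal
in at least one realisation. -/
def QBase (Γ : Pos → Move → Option Pos) (S : Finset Pos) (M : Finset Move) : Prop :=
  M.Nonempty ∧ ∀ m ∈ M, MoveLegal Γ S m

/-- Ruleset A : superpositions of at least two distinct classical moves. -/
def QLegalA (Γ : Pos → Move → Option Pos) (S : Finset Pos) (M : Finset Move) : Prop :=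
  QBase Γ S M ∧ 2 ≤ M.card

/-- Ruleset B : as A, except a lone classical move may be played when it is the
only legal classical move over all realisations. -/
def QLegalB (Γ : Pos → Move → Option Pos) (S : Finset Pos) (M : Finset Move) : Prop :=
  QBase Γ S M ∧ (2 ≤ M.card ∨ ∀ m, MoveLegal Γ S m → m ∈ M)

/-- Ruleset C : a lone classical move must be legal in every realisation. -/
def QLegalC (Γ : Pos → Move → Option Pos) (S : Finset Pos) (M : Finset Move) : Prop :=
  QBase Γ S M ∧ (2 ≤ M.card ∨ ∀ G ∈ S, ∀ m ∈ M, (Γ G m).isSome)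

/-- A single classical move is C'-allowed: legal in every realisation where the
mover still has at least one classical move. -/
def SingleLegalC' (Γ : Pos → Move → Option Pos) (S : Finset Pos) (m : Move) : Prop :=
  ∀ G ∈ S, (∃ m', (Γ G m').isSome) → (Γ G m).isSome

/-- Ruleset C'. -/
def QLegalC' (Γ : Pos → Move → Option Pos) (S : Finset Pos) (M : Finset Move) : Prop :=
  QBase Γ S M ∧ (2 ≤ M.card ∨ ∀ m ∈ M, SingleLegalC' Γ S m)

/-- Ruleset D : any nonempty superposition of legal classical moves. -/
def QLegalD (Γ : Pos → Move → Option Pos) (S : Finset Pos) (M : Finset Move) : Prop :=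
  QBase Γ S M

def optA (Γ : Pos → Move → Option Pos) (S : Finset Pos) : Set (Finset Pos) :=
  {T | ∃ M, QLegalA Γ S M ∧ T = qApply Γ S M}
def optB (Γ : Pos → Move → Option Pos) (S : Finset Pos) : Set (Finset Pos) :=
  {T | ∃ M, QLegalB Γ S M ∧ T = qApply Γ S M}
def optC (Γ : Pos → Move → Option Pos) (S : Finset Pos) : Set (Finset Pos) :=
  {T | ∃ M, QLegalC Γ S M ∧ T = qApply Γ S M}
def optC' (Γ : Pos → Move → Option Pos) (S : Finset Pos) : Set (Finset Pos) :=
  {T | ∃ M, QLegalC' Γ S M ∧ T = qApply Γ S M}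
def optD (Γ : Pos → Move → Option Pos) (S : Finset Pos) : Set (Finset Pos) :=
  {T | ∃ M, QLegalD Γ S M ∧ T = qApply Γ S M}

/-- `NPos opt p` : under normal play, the player to move from `p` wins,
i.e. there is a move to a position all of whose options are again `NPos`
(that is, to a previous-player-win position). -/
inductive NPos {α : Type*} (opt : α → Set α) : α → Prop where
  | mk (p q : α) (hq : q ∈ opt p) (h : ∀ r, r ∈ opt q → NPos opt r) :
      NPos opt p

/-- `PPos opt p` : `p` is a previous-player win (the second player wins)
under normal play: every option is a next-player win. -/
def PPos {α : Type*} (opt : α → Set α) (p : α) : Prop :=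
  ∀ q ∈ opt p, NPos opt q

/-- Options of the sum of a game with a classical Nim heap: move in the game
component, or decrease the heap component. -/
def sumNimOpt {α : Type*} (opt : α → Set α) : α × ℕ → Set (α × ℕ) :=
  fun x => {y | (y.1 ∈ opt x.1 ∧ y.2 = x.2) ∨ (y.1 = x.1 ∧ y.2 < x.2)}

/-- `HasGrundy opt p n` : position `p` has Sprague–Grundy value `n` (the value
obtained by the mex rule). By the Sprague–Grundy theorem this holds iff the sum
of `p` with a Nim heap of `n` tokens is a previous-player win. -/
def HasGrundy {α : Type*} (opt : α → Set α) (p : α) (n : ℕ) : Prop :=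
  PPos (sumNimOpt opt) (p, n)

/-- Classical single-heap Nim: from a heap of `n` tokens, the move labelled `x`
removes `x` tokens, legal when `1 ≤ x ≤ n`. -/
def nimΓ : ℕ → ℕ → Option ℕ := fun n x =>
  if 1 ≤ x ∧ x ≤ n then some (n - x) else none

end QGame

namespace QGame

/-!
Every Q-move strictly lowers the largest heap, and from a superposition whose largest heap is
`k` the single classical move removing `k - m` tokens (for `m < k`) leads to a superposition
whose largest heap is exactly `m`. So the largest heap is a rank whose option values are
precisely `0, …, k - 1`, and such a rank is the Grundy value.
-/

theorem hasGrundy_of_image_opt_eq_Iio {α : Type*} {opt : α → Set α} (g : α → ℕ)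
    (hg : ∀ p, g '' opt p = Set.Iio (g p)) (p : α) : HasGrundy opt p (g p) := by
  suffices ∀ n p, g p = n → HasGrundy opt p n from this _ p rfl
  intro n
  induction n using Nat.strong_induction_on with
  | _ n ih =>
  intro p hn
  have hlt : ∀ q ∈ opt p, g q < n := fun q hq => hn ▸ (hg p).subset ⟨q, hq, rfl⟩
  rintro ⟨q, m⟩ (⟨hq, rfl⟩ | ⟨hqp, hm⟩)
  · exact NPos.mk _ (q, g q) (Or.inr ⟨rfl, hlt q hq⟩) (ih _ (hlt q hq) q rfl)
  · dsimp only at hqp hm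
    rw [hqp]
    obtain ⟨q, hq, rfl⟩ := (hg p).superset (show m ∈ Set.Iio (g p) from hn ▸ hm)
    exact NPos.mk _ (q, g q) (Or.inl ⟨hq, rfl⟩) (ih _ hm q rfl)

theorem nimΓ_eq_some {n x r : ℕ} : nimΓ n x = some r ↔ 1 ≤ x ∧ x ≤ n ∧ n - x = r := by
  unfold nimΓ
  split <;> simp_all

theorem mem_qApply_nimΓ {S M : Finset ℕ} {r : ℕ} :
    r ∈ qApply nimΓ S M ↔ ∃ G ∈ S, ∃ x ∈ M, 1 ≤ x ∧ x ≤ G ∧ G - x = r := by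
  simp only [qApply, Finset.mem_biUnion, Option.mem_toFinset, Option.mem_def, nimΓ_eq_some]

theorem moveLegal_nimΓ {S : Finset ℕ} {x : ℕ} :
    MoveLegal nimΓ S x ↔ ∃ G ∈ S, 1 ≤ x ∧ x ≤ G := by
  simp only [MoveLegal, Option.isSome_iff_exists, nimΓ_eq_some]
  grind

theorem sup_lt_of_mem_optD_nimΓ {S T : Finset ℕ} (hT : T ∈ optD nimΓ S) :
    T.sup id < S.sup id := by
  obtain ⟨M, ⟨⟨x, hx⟩, hlegal⟩, rfl⟩ := hT
  obtain ⟨G, hG, hx₁, hxG⟩ := moveLegal_nimΓ.mp (hlegal x hx)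
  have hGS : G ≤ S.sup id := Finset.le_sup (f := id) hG
  refine (Finset.sup_lt_iff (by simp only [bot_eq_zero']; omega)).mpr fun r hr => ?_
  obtain ⟨G', hG', x', -, hx'₁, hx'G, rfl⟩ := mem_qApply_nimΓ.mp hr
  have : G' ≤ S.sup id := Finset.le_sup (f := id) hG'
  simp only [id]
  omega

theorem exists_mem_optD_nimΓ_sup_eq {S : Finset ℕ} {m : ℕ} (hm : m < S.sup id) :
    ∃ T ∈ optD nimΓ S, T.sup id = m := by
  set k := S.sup id
  have hS : S.Nonempty := Finset.nonempty_iff_ne_empty.mpr fun h => by simp [k, h] at hm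
  obtain ⟨K, hK, hKk : k = K⟩ := Finset.exists_mem_eq_sup S hS id
  have hmT : m ∈ qApply nimΓ S {k - m} :=
    mem_qApply_nimΓ.mpr ⟨K, hK, k - m, Finset.mem_singleton_self _, by omega⟩
  refine ⟨qApply nimΓ S {k - m}, ⟨{k - m}, ⟨Finset.singleton_nonempty _, ?_⟩, rfl⟩, ?_⟩
  · intro x hx
    rw [Finset.mem_singleton.mp hx]
    exact moveLegal_nimΓ.mpr ⟨K, hK, by omega⟩
  · refine le_antisymm (Finset.sup_le fun r hr => ?_) (Finset.le_sup (f := id) hmT)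
    obtain ⟨G, hG, x, hx, -, hxG, rfl⟩ := mem_qApply_nimΓ.mp hr
    have : G ≤ k := Finset.le_sup (f := id) hG
    rw [Finset.mem_singleton.mp hx]
    simp only [id]
    omega

theorem image_sup_optD_nimΓ (S : Finset ℕ) :
    (fun T : Finset ℕ => T.sup id) '' optD nimΓ S = Set.Iio (S.sup id) :=
  Set.Subset.antisymm (Set.image_subset_iff.mpr fun _ => sup_lt_of_mem_optD_nimΓ)
    fun _ hm => exists_mem_optD_nimΓ_sup_eq hm

/-- In Ruleset D of Quantum Nim, a superposition of single Nim
heaps whose largest heap has size `k` has Grundy value `k`. -/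
theorem rulesetD_single_heap_value (S : Finset ℕ) (hS : S.Nonempty) (k : ℕ)
    (hmax : S.max' hS = k) :
    HasGrundy (optD nimΓ) S k := by
  rw [Finset.max'_eq_sup', Finset.sup'_eq_sup] at hmax
  subst hmax
  exact hasGrundy_of_image_opt_eq_Iio _ image_sup_optD_nimΓ S

end QGame
end

section
/- In Ruleset C' of Quantum Nim on a single heap, the positions ⟨Nim(1),Nim(2)⟩ and ⟨Nim(0),Nim(1),Nim(2)⟩ each have exactly two legal Q-moves, namely the single move 'remove 1' and the superposition {'remove 1','remove 2'}, and both lead to ⟨Nim(0),Nim(1)⟩; consequently both positions have Grundy value 0. -/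
/-! Removing one token is legal in every nonzero realisation, while removing two fails on the
heap `1`; so from `⟨1, 2⟩` and `⟨0, 1, 2⟩` the only C'-moves are `{1}` and `{1, 2}`, and both
reach `⟨0, 1⟩`. That position is a next-player win, since `{1}` takes it to the terminal `⟨0⟩`,
so both positions have Grundy value `0`. -/

namespace QGame

section Grundy

variable {α : Type*} {opt : α → Set α} {p q : α}

theorem hasGrundy_zero_iff :
    HasGrundy opt p 0 ↔ ∀ q ∈ opt p, NPos (sumNimOpt opt) (q, 0) := by
  constructor
  · exact fun h q hq => h (q, 0) (Or.inl ⟨hq, rfl⟩)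
  · rintro h ⟨q, n⟩ (⟨hq, rfl⟩ | ⟨-, hn⟩)
    · exact h q hq
    · exact absurd hn (Nat.not_lt_zero n)

theorem hasGrundy_zero_of_opt_eq_empty (h : opt p = ∅) : HasGrundy opt p 0 :=
  hasGrundy_zero_iff.2 fun q hq => by simp [h] at hq

theorem nPos_sumNimOpt_zero_of_mem (hq : q ∈ opt p) (hq₀ : HasGrundy opt q 0) :
    NPos (sumNimOpt opt) (p, 0) :=
  NPos.mk _ (q, 0) (Or.inl ⟨hq, rfl⟩) hq₀

theorem hasGrundy_zero_of_forall_opt_eq {r : α} (h : ∀ q ∈ opt p, q = r)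
    (hr : NPos (sumNimOpt opt) (r, 0)) : HasGrundy opt p 0 :=
  hasGrundy_zero_iff.2 fun q hq => h q hq ▸ hr

end Grundy

theorem nimΓ_isSome_iff {n x : ℕ} : (nimΓ n x).isSome ↔ 1 ≤ x ∧ x ≤ n := by
  unfold nimΓ
  split <;> simp_all

theorem moveLegal_nimΓ_iff {S : Finset ℕ} {x : ℕ} :
    MoveLegal nimΓ S x ↔ ∃ n ∈ S, 1 ≤ x ∧ x ≤ n := by
  simp only [MoveLegal, nimΓ_isSome_iff]

theorem singleLegalC'_nimΓ_iff {S : Finset ℕ} {x : ℕ} :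
    SingleLegalC' nimΓ S x ↔ ∀ n ∈ S, n ≠ 0 → 1 ≤ x ∧ x ≤ n := by
  have hmovable (n : ℕ) : (∃ y, 1 ≤ y ∧ y ≤ n) ↔ n ≠ 0 :=
    ⟨fun ⟨y, hy⟩ => by omega, fun hn => ⟨1, by omega⟩⟩
  simp only [SingleLegalC', nimΓ_isSome_iff, hmovable]

theorem qLegalC'_nimΓ_singleton_iff {S : Finset ℕ} {x : ℕ} :
    QLegalC' nimΓ S {x} ↔ (∃ n ∈ S, 1 ≤ x ∧ x ≤ n) ∧ ∀ n ∈ S, n ≠ 0 → 1 ≤ x ∧ x ≤ n := by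
  simp only [QLegalC', QBase, Finset.card_singleton, Finset.mem_singleton, forall_eq,
    moveLegal_nimΓ_iff, singleLegalC'_nimΓ_iff, Finset.singleton_nonempty, true_and,
    Nat.not_ofNat_le_one, false_or]

theorem qLegalC'_nimΓ_singleton_one_iff {S : Finset ℕ} :
    QLegalC' nimΓ S {1} ↔ ∃ n ∈ S, n ≠ 0 := by
  rw [qLegalC'_nimΓ_singleton_iff]
  exact ⟨fun ⟨⟨n, hn, hn₁⟩, _⟩ => ⟨n, hn, by omega⟩,
    fun ⟨n, hn, hn₀⟩ => ⟨⟨n, hn, le_rfl, by omega⟩, fun m _ hm => ⟨le_rfl, by omega⟩⟩⟩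

theorem optC'_nimΓ_zero : optC' nimΓ {0} = ∅ := by
  refine Set.eq_empty_of_forall_notMem ?_
  rintro _ ⟨M, ⟨⟨⟨x, hx⟩, hlegal⟩, -⟩, -⟩
  obtain ⟨n, hn, hx₁, hxn⟩ := moveLegal_nimΓ_iff.1 (hlegal x hx)
  rw [Finset.mem_singleton] at hn
  omega

theorem eq_of_nonempty_of_subset_one_two {M : Finset ℕ} (hne : M.Nonempty)
    (hM : M ⊆ {1, 2}) : M = {1} ∨ M = {2} ∨ M = {1, 2} := by
  have key : ∀ N ∈ ({1, 2} : Finset ℕ).powerset, N.Nonempty →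
      N = {1} ∨ N = {2} ∨ N = {1, 2} := by
    decide
  exact key M (Finset.mem_powerset.2 hM) hne

theorem qLegalC'_nimΓ_iff_of_one_mem_of_two_mem {S : Finset ℕ} (h₁ : 1 ∈ S) (h₂ : 2 ∈ S)
    (hS : ∀ n ∈ S, n ≤ 2) (M : Finset ℕ) :
    QLegalC' nimΓ S M ↔ M = {1} ∨ M = {1, 2} := by
  constructor
  · intro hM
    obtain ⟨hne, hlegal⟩ := hM.1
    have hsub : M ⊆ {1, 2} := fun x hx => by
      obtain ⟨n, hn, hx₁, hxn⟩ := moveLegal_nimΓ_iff.1 (hlegal x hx)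
      have := hS n hn
      simp only [Finset.mem_insert, Finset.mem_singleton]
      omega
    rcases eq_of_nonempty_of_subset_one_two hne hsub with rfl | rfl | rfl
    · exact Or.inl rfl
    · -- removing 2 tokens is illegal in the nonzero realisation `1`
      have := (qLegalC'_nimΓ_singleton_iff.1 hM).2 1 h₁ one_ne_zero
      omega
    · exact Or.inr rfl
  · rintro (rfl | rfl)
    · exact qLegalC'_nimΓ_singleton_one_iff.2 ⟨1, h₁, one_ne_zero⟩
    · refine ⟨⟨Finset.insert_nonempty _ _, fun x hx => moveLegal_nimΓ_iff.2 ⟨2, h₂, ?_⟩⟩,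
        Or.inl (by decide)⟩
      simp only [Finset.mem_insert, Finset.mem_singleton] at hx
      omega

theorem nPos_zero_one : NPos (sumNimOpt (optC' nimΓ)) ({0, 1}, 0) := by
  have hlegal : QLegalC' nimΓ {0, 1} {1} :=
    qLegalC'_nimΓ_singleton_one_iff.2 ⟨1, by simp, one_ne_zero⟩
  exact nPos_sumNimOpt_zero_of_mem ⟨{1}, hlegal, by decide⟩
    (hasGrundy_zero_of_opt_eq_empty optC'_nimΓ_zero)

/-- in Ruleset C', the positions `⟨Nim(1), Nim(2)⟩` and
`⟨Nim(0), Nim(1), Nim(2)⟩` each have exactly two legal Q-moves, `{1}` and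
`{1, 2}`, both leading to `⟨Nim(0), Nim(1)⟩`; consequently both positions
have Grundy value `0`. -/
theorem rulesetC'_exceptional_positions :
    (∀ M, QLegalC' nimΓ ({1, 2} : Finset ℕ) M ↔
      (M = ({1} : Finset ℕ) ∨ M = ({1, 2} : Finset ℕ))) ∧
    (∀ M, QLegalC' nimΓ ({0, 1, 2} : Finset ℕ) M ↔
      (M = ({1} : Finset ℕ) ∨ M = ({1, 2} : Finset ℕ))) ∧
    qApply nimΓ ({1, 2} : Finset ℕ) ({1} : Finset ℕ) = ({0, 1} : Finset ℕ) ∧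
    qApply nimΓ ({1, 2} : Finset ℕ) ({1, 2} : Finset ℕ) = ({0, 1} : Finset ℕ) ∧
    qApply nimΓ ({0, 1, 2} : Finset ℕ) ({1} : Finset ℕ) = ({0, 1} : Finset ℕ) ∧
    qApply nimΓ ({0, 1, 2} : Finset ℕ) ({1, 2} : Finset ℕ) = ({0, 1} : Finset ℕ) ∧
    HasGrundy (optC' nimΓ) ({1, 2} : Finset ℕ) 0 ∧
    HasGrundy (optC' nimΓ) ({0, 1, 2} : Finset ℕ) 0 := by
  have hlegal₁ := qLegalC'_nimΓ_iff_of_one_mem_of_two_mem (S := {1, 2}) (by decide) (by decide)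
    (by decide)
  have hlegal₂ := qLegalC'_nimΓ_iff_of_one_mem_of_two_mem (S := {0, 1, 2}) (by decide)
    (by decide) (by decide)
  have h₁ : qApply nimΓ {1, 2} {1} = {0, 1} := by decide
  have h₁₂ : qApply nimΓ {1, 2} {1, 2} = {0, 1} := by decide
  have h₀₁ : qApply nimΓ {0, 1, 2} {1} = {0, 1} := by decide
  have h₀₁₂ : qApply nimΓ {0, 1, 2} {1, 2} = {0, 1} := by decide
  refine ⟨hlegal₁, hlegal₂, h₁, h₁₂, h₀₁, h₀₁₂, ?_, ?_⟩
  · refine hasGrundy_zero_of_forall_opt_eq ?_ nPos_zero_one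
    rintro _ ⟨M, hM, rfl⟩
    rcases (hlegal₁ M).1 hM with rfl | rfl <;> assumption
  · refine hasGrundy_zero_of_forall_opt_eq ?_ nPos_zero_one
    rintro _ ⟨M, hM, rfl⟩
    rcases (hlegal₂ M).1 hM with rfl | rfl <;> assumption

end QGame
end
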